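/- For any standard orthonormal basis {𝒜₀=I, 𝒜₁, 𝒜₂, 𝒜₃} of 2×2 Hermitian matrices, there exists a 2×2 unitary U such that U𝒜₁U* = X, U𝒜₃U* = Z, and U𝒜₂U* = Y or U𝒜₂U* = −Y. -/
import Mathlib

open Matrix

noncomputable def pauliX : Matrix (Fin 2) (Fin 2) ℂ := !![0, 1; 1, 0]
noncomputable def pauliY : Matrix (Fin 2) (Fin 2) ℂ := !![0, -Complex.I; Complex.I, 0]
noncomputable def pauliZ : Matrix (Fin 2) (Fin 2) ℂ := !![1, 0; 0, -1]

/-- A standard orthonormal basis of the 2×2 Hermitian matrices. -/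
structure StdONB2 (𝒜 : Fin 4 → Matrix (Fin 2) (Fin 2) ℂ) : Prop where
  herm : ∀ i, (𝒜 i).IsHermitian
  first : 𝒜 0 = 1
  ortho : ∀ i j, ((𝒜 i)ᴴ * 𝒜 j).trace / 2 = if i = j then 1 else 0

section Aux

variable {A B U V : Matrix (Fin 2) (Fin 2) ℂ}

lemma conj_herm (hA : A.IsHermitian) : (U * A * Uᴴ).IsHermitian := by
  unfold Matrix.IsHermitian
  rw [conjTranspose_mul, conjTranspose_mul, conjTranspose_conjTranspose, hA.eq, mul_assoc]

lemma conj_eq (hU' : Uᴴ * U = 1) : (U * A * Uᴴ) * (U * B * Uᴴ) = U * (A * B) * Uᴴ := by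
  simp only [Matrix.mul_assoc]
  rw [← Matrix.mul_assoc Uᴴ U, hU', Matrix.one_mul]

lemma conj_norm (hU' : Uᴴ * U = 1) :
    ((U * A * Uᴴ)ᴴ * (U * A * Uᴴ)).trace = (Aᴴ * A).trace := by
  have e : (U * A * Uᴴ)ᴴ * (U * A * Uᴴ) = U * (Aᴴ * A) * Uᴴ := by
    rw [conjTranspose_mul, conjTranspose_mul, conjTranspose_conjTranspose]
    simp only [Matrix.mul_assoc]
    rw [← Matrix.mul_assoc Uᴴ U, hU', Matrix.one_mul]
  rw [e, Matrix.mul_assoc, Matrix.trace_mul_comm, Matrix.mul_assoc, hU', Matrix.mul_one]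

lemma conj_anticomm (hU' : Uᴴ * U = 1) (hAB : A * B + B * A = 0) :
    (U * A * Uᴴ) * (U * B * Uᴴ) + (U * B * Uᴴ) * (U * A * Uᴴ) = 0 := by
  rw [conj_eq hU', conj_eq hU', ← Matrix.add_mul, ← Matrix.mul_add, hAB,
    Matrix.mul_zero, Matrix.zero_mul]

lemma anticomm_of_ortho (hA : A.IsHermitian) (htA : A.trace = 0) (htB : B.trace = 0)
    (hAB : (Aᴴ * B).trace = 0) : A * B + B * A = 0 := by
  have h11 : A 1 1 = -A 0 0 := by
    have := htA; simp [Matrix.trace, Fin.sum_univ_two] at this; linear_combination this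
  have hB11 : B 1 1 = -B 0 0 := by
    have := htB; simp [Matrix.trace, Fin.sum_univ_two] at this; linear_combination this
  have htr : 2 * (A 0 0 * B 0 0) + A 0 1 * B 1 0 + A 1 0 * B 0 1 = 0 := by
    have := hAB
    rw [hA.eq] at this
    simp [Matrix.trace, Matrix.mul_apply, Fin.sum_univ_two, h11, hB11] at this
    linear_combination this
  ext i j
  fin_cases i <;> fin_cases j <;>
    simp [Matrix.mul_apply, Fin.sum_univ_two, h11, hB11] <;>
    first
      | linear_combination htr
      | linear_combination -htr
      | ring1


lemma exists_conj_Z (A : Matrix (Fin 2) (Fin 2) ℂ) (hH : A.IsHermitian)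
    (htA : A.trace = 0) (hn : (Aᴴ * A).trace = 2) :
    ∃ V : Matrix (Fin 2) (Fin 2) ℂ, V ∈ Matrix.unitaryGroup (Fin 2) ℂ ∧ V * A * Vᴴ = pauliZ := by
  have h11 : A 1 1 = -A 0 0 := by
    have := htA; simp [Matrix.trace, Fin.sum_univ_two] at this; linear_combination this
  have h01 : A 0 1 = (starRingEnd ℂ) (A 1 0) := by
    have := congrFun (congrFun hH.eq 0) 1
    simpa [Matrix.conjTranspose_apply, Complex.star_def] using this.symm
  have ha : (starRingEnd ℂ) (A 0 0) = A 0 0 := by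
    have := congrFun (congrFun hH.eq 0) 0
    simpa [Matrix.conjTranspose_apply, Complex.star_def] using this
  have haa : A 0 0 = ((A 0 0).re : ℂ) := (Complex.conj_eq_iff_re.mp ha).symm
  set α : ℝ := (A 0 0).re with hα
  have hnorm : A 0 0 * A 0 0 + A 1 0 * (starRingEnd ℂ) (A 1 0) = 1 := by
    have := hn; rw [hH.eq] at this
    simp [Matrix.trace, Matrix.mul_apply, Fin.sum_univ_two, h11, h01,
      Complex.star_def] at this
    linear_combination this / 2
  have hmc : A 1 0 * (starRingEnd ℂ) (A 1 0) = (Complex.normSq (A 1 0) : ℂ) :=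
    Complex.mul_conj _
  have hnormR : α ^ 2 + Complex.normSq (A 1 0) = 1 := by
    have : ((α ^ 2 + Complex.normSq (A 1 0) : ℝ) : ℂ) = 1 := by
      push_cast
      rw [← hmc, ← haa]
      linear_combination hnorm
    exact_mod_cast this
  by_cases hcase : A 0 0 = -1
  · -- A = -Z, conjugate by X
    have hA10 : A 1 0 = 0 := by
      have hα1 : α = -1 := by
        have := haa.symm.trans hcase
        exact_mod_cast this
      have : Complex.normSq (A 1 0) = 0 := by rw [hα1] at hnormR; nlinarith
      exact Complex.normSq_eq_zero.mp this
    have hA : A = !![-1, 0; 0, 1] := by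
      ext i j
      fin_cases i <;> fin_cases j <;>
        simp [hcase, hA10, h01, h11]
    refine ⟨pauliX, ?_, ?_⟩
    · rw [Matrix.mem_unitaryGroup_iff, Matrix.star_eq_conjTranspose]
      ext i j
      fin_cases i <;> fin_cases j <;>
        simp [pauliX, Matrix.mul_apply, Fin.sum_univ_two, Matrix.conjTranspose_apply,
          Matrix.one_apply]
    · rw [hA]
      ext i j
      fin_cases i <;> fin_cases j <;>
        simp [pauliX, pauliZ, Matrix.mul_apply, Fin.sum_univ_two,
          Matrix.conjTranspose_apply]
  · -- general case
    have hαne : α ≠ -1 := by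
      intro hα1
      apply hcase
      rw [haa, hα1]; norm_num
    have hαle : -1 ≤ α := by nlinarith [Complex.normSq_nonneg (A 1 0)]
    have hαlt : -1 < α := lt_of_le_of_ne hαle (Ne.symm hαne)
    have hpos : (0:ℝ) < 2 + 2 * α := by linarith
    set t : ℝ := Real.sqrt (2 + 2 * α) with htdef
    have ht2 : t ^ 2 = 2 + 2 * α := Real.sq_sqrt hpos.le
    have htpos : 0 < t := Real.sqrt_pos.mpr hpos
    have htc : ((t : ℂ)) ^ 2 = 2 + 2 * A 0 0 := by
      rw [haa]; exact_mod_cast ht2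
    have htne : (t : ℂ) ≠ 0 := by
      exact_mod_cast htpos.ne'
    have key : ((t:ℂ))⁻¹ * ((t:ℂ))⁻¹ * ((2 : ℂ) + 2 * A 0 0) = 1 := by
      rw [← htc]
      field_simp
    set S : Matrix (Fin 2) (Fin 2) ℂ := A + pauliZ with hSdef
    have hSH : Sᴴ = S := by
      rw [hSdef, Matrix.conjTranspose_add, hH.eq]
      congr 1
      ext i j
      fin_cases i <;> fin_cases j <;> simp [pauliZ, Matrix.conjTranspose_apply]
    have hS2 : S * S = ((2 : ℂ) + 2 * A 0 0) • (1 : Matrix (Fin 2) (Fin 2) ℂ) := by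
      ext i j
      fin_cases i <;> fin_cases j <;>
        simp [hSdef, pauliZ, Matrix.mul_apply, Fin.sum_univ_two, Matrix.one_apply,
          h11, h01, Complex.star_def] <;>
        first
          | ring1
          | linear_combination hnorm
          | linear_combination -hnorm
          | linear_combination (A 0 0 + 2) * hnorm
          | linear_combination (-(A 0 0 + 2)) * hnorm
          | linear_combination ((starRingEnd ℂ) (A 1 0)) * hnorm
          | linear_combination (-((starRingEnd ℂ) (A 1 0))) * hnorm
          | linear_combination (A 1 0) * hnorm
          | linear_combination (-(A 1 0)) * hnorm
    have hSAS : S * A * S = ((2 : ℂ) + 2 * A 0 0) • pauliZ := by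
      ext i j
      fin_cases i <;> fin_cases j <;>
        simp [hSdef, pauliZ, Matrix.mul_apply, Fin.sum_univ_two, h11, h01,
          Complex.star_def] <;>
        first
          | ring1
          | linear_combination hnorm
          | linear_combination -hnorm
          | linear_combination (A 0 0 + 2) * hnorm
          | linear_combination (-(A 0 0 + 2)) * hnorm
          | linear_combination ((starRingEnd ℂ) (A 1 0)) * hnorm
          | linear_combination (-((starRingEnd ℂ) (A 1 0))) * hnorm
          | linear_combination (A 1 0) * hnorm
          | linear_combination (-(A 1 0)) * hnorm
    set V : Matrix (Fin 2) (Fin 2) ℂ := ((t : ℂ))⁻¹ • S with hVdef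
    have hVH : Vᴴ = V := by
      rw [hVdef, Matrix.conjTranspose_smul, hSH]
      congr 1
      simp [Complex.star_def, Complex.conj_ofReal]
    have hVV : V * V = 1 := by
      calc V * V = (((t:ℂ))⁻¹ * ((t:ℂ))⁻¹) • (S * S) := by
            rw [hVdef, smul_mul_assoc, mul_smul_comm, smul_smul]
        _ = 1 := by rw [hS2, smul_smul, key, one_smul]
    refine ⟨V, ?_, ?_⟩
    · rw [Matrix.mem_unitaryGroup_iff, Matrix.star_eq_conjTranspose, hVH]
      exact hVV
    · rw [hVH]
      calc V * A * V = (((t:ℂ))⁻¹ * ((t:ℂ))⁻¹) • (S * A * S) := by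
            rw [hVdef, smul_mul_assoc, smul_mul_assoc, mul_smul_comm, smul_smul]
        _ = pauliZ := by rw [hSAS, smul_smul, key, one_smul]

end Aux

theorem stmt9 (𝒜 : Fin 4 → Matrix (Fin 2) (Fin 2) ℂ) (h : StdONB2 𝒜) :
    ∃ U : Matrix (Fin 2) (Fin 2) ℂ, U ∈ Matrix.unitaryGroup (Fin 2) ℂ ∧
      U * 𝒜 1 * Uᴴ = pauliX ∧ U * 𝒜 3 * Uᴴ = pauliZ ∧
      (U * 𝒜 2 * Uᴴ = pauliY ∨ U * 𝒜 2 * Uᴴ = -pauliY) := by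
  -- basic consequences of orthonormality
  have htr : ∀ i : Fin 4, i ≠ 0 → (𝒜 i).trace = 0 := by
    intro i hi
    have h0 := h.ortho 0 i
    rw [h.first] at h0
    rw [if_neg (Ne.symm hi)] at h0
    simp only [Matrix.conjTranspose_one, Matrix.one_mul] at h0
    linear_combination 2 * h0
  have hnrm : ∀ i : Fin 4, ((𝒜 i)ᴴ * 𝒜 i).trace = 2 := by
    intro i
    have h0 := h.ortho i i
    rw [if_pos rfl] at h0
    linear_combination 2 * h0
  have horth : ∀ i j : Fin 4, i ≠ j → ((𝒜 i)ᴴ * 𝒜 j).trace = 0 := by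
    intro i j hij
    have h0 := h.ortho i j
    rw [if_neg hij] at h0
    linear_combination 2 * h0
  -- anticommutation relations
  have hAC13 : 𝒜 1 * 𝒜 3 + 𝒜 3 * 𝒜 1 = 0 :=
    anticomm_of_ortho (h.herm 1) (htr 1 (by decide)) (htr 3 (by decide))
      (horth 1 3 (by decide))
  have hAC23 : 𝒜 2 * 𝒜 3 + 𝒜 3 * 𝒜 2 = 0 :=
    anticomm_of_ortho (h.herm 2) (htr 2 (by decide)) (htr 3 (by decide))
      (horth 2 3 (by decide))
  have hAC21 : 𝒜 2 * 𝒜 1 + 𝒜 1 * 𝒜 2 = 0 :=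
    anticomm_of_ortho (h.herm 2) (htr 2 (by decide)) (htr 1 (by decide))
      (horth 2 1 (by decide))
  -- step 1: conjugate 𝒜 3 to Z
  obtain ⟨V1, hV1mem, hV1Z⟩ := exists_conj_Z (𝒜 3) (h.herm 3) (htr 3 (by decide))
    (hnrm 3)
  have hV1' : V1ᴴ * V1 = 1 := by
    rw [← Matrix.star_eq_conjTranspose]
    exact Matrix.mem_unitaryGroup_iff'.mp hV1mem
  -- the conjugate of 𝒜 1
  set B1 : Matrix (Fin 2) (Fin 2) ℂ := V1 * 𝒜 1 * V1ᴴ with hB1def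
  have hB1H : B1.IsHermitian := conj_herm (h.herm 1)
  have hB1n : (B1ᴴ * B1).trace = 2 := by
    rw [hB1def, conj_norm hV1']; exact hnrm 1
  have hB1anti : B1 * pauliZ + pauliZ * B1 = 0 := by
    have h0 := conj_anticomm (A := 𝒜 1) (B := 𝒜 3) hV1' hAC13
    rw [hV1Z] at h0
    exact h0
  have hB100 : B1 0 0 = 0 := by
    have h0 := congrFun (congrFun hB1anti 0) 0
    simp [pauliZ, Matrix.mul_apply, Matrix.vecMul, dotProduct, Matrix.vecHead,
      Matrix.vecTail, Fin.sum_univ_two] at h0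
    linear_combination h0
  have hB111 : B1 1 1 = 0 := by
    have h0 := congrFun (congrFun hB1anti 1) 1
    simp [pauliZ, Matrix.mul_apply, Matrix.vecMul, dotProduct, Matrix.vecHead,
      Matrix.vecTail, Fin.sum_univ_two] at h0
    linear_combination h0
  have hB101 : B1 0 1 = (starRingEnd ℂ) (B1 1 0) := by
    have h0 := congrFun (congrFun hB1H.eq 0) 1
    simpa [Matrix.conjTranspose_apply, Complex.star_def] using h0.symm
  set q : ℂ := B1 1 0 with hqdef
  have hq : q * (starRingEnd ℂ) q = 1 := by
    have h0 := hB1n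
    rw [hB1H.eq] at h0
    simp [Matrix.trace, Matrix.mul_apply, Fin.sum_univ_two, hB100, hB111, hB101,
      Complex.star_def, ← hqdef] at h0
    linear_combination h0 / 2
  -- step 2: the diagonal unitary
  set V2 : Matrix (Fin 2) (Fin 2) ℂ := !![q, 0; 0, 1] with hV2def
  have hV2mem : V2 ∈ Matrix.unitaryGroup (Fin 2) ℂ := by
    rw [Matrix.mem_unitaryGroup_iff, Matrix.star_eq_conjTranspose]
    ext i j
    fin_cases i <;> fin_cases j <;>
      simp [hV2def, Matrix.mul_apply, Fin.sum_univ_two, Matrix.conjTranspose_apply,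
        Matrix.one_apply, Complex.star_def] <;>
      linear_combination hq
  have hV2' : V2ᴴ * V2 = 1 := by
    rw [← Matrix.star_eq_conjTranspose]
    exact Matrix.mem_unitaryGroup_iff'.mp hV2mem
  have hconj : ∀ A : Matrix (Fin 2) (Fin 2) ℂ,
      (V2 * V1) * A * (V2 * V1)ᴴ = V2 * (V1 * A * V1ᴴ) * V2ᴴ := by
    intro A
    rw [Matrix.conjTranspose_mul]
    simp only [Matrix.mul_assoc]
  have hV2Z : V2 * pauliZ * V2ᴴ = pauliZ := by
    ext i j
    fin_cases i <;> fin_cases j <;>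
      simp [hV2def, pauliZ, Matrix.mul_apply, Fin.sum_univ_two,
        Matrix.conjTranspose_apply, Complex.star_def] <;>
      first
        | ring1
        | linear_combination hq
  have hV2B1 : V2 * B1 * V2ᴴ = pauliX := by
    ext i j
    fin_cases i <;> fin_cases j <;>
      simp [hV2def, pauliX, Matrix.mul_apply, Matrix.vecMul, dotProduct,
        Matrix.vecHead, Matrix.vecTail, Fin.sum_univ_two,
        Matrix.conjTranspose_apply, hB100, hB111, hB101, ← hqdef, Complex.star_def] <;>
      first
        | ring1
        | linear_combination hq
  have hUX : (V2 * V1) * 𝒜 1 * (V2 * V1)ᴴ = pauliX := by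
    rw [hconj, ← hB1def, hV2B1]
  have hUZ : (V2 * V1) * 𝒜 3 * (V2 * V1)ᴴ = pauliZ := by
    rw [hconj, hV1Z, hV2Z]
  refine ⟨V2 * V1, mul_mem hV2mem hV1mem, hUX, hUZ, ?_⟩
  set C : Matrix (Fin 2) (Fin 2) ℂ := (V2 * V1) * 𝒜 2 * (V2 * V1)ᴴ with hCdef
  have hCH : C.IsHermitian := by
    rw [hCdef, hconj]
    exact conj_herm (conj_herm (h.herm 2))
  have hCn : (Cᴴ * C).trace = 2 := by
    rw [hCdef, hconj, conj_norm hV2', conj_norm hV1']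
    exact hnrm 2
  have hCZ : C * pauliZ + pauliZ * C = 0 := by
    have h1 := conj_anticomm (A := 𝒜 2) (B := 𝒜 3) hV1' hAC23
    rw [hV1Z] at h1
    have h2 := conj_anticomm (A := V1 * 𝒜 2 * V1ᴴ) (B := pauliZ) hV2' h1
    rw [hV2Z, ← hconj] at h2
    exact h2
  have hCX : C * pauliX + pauliX * C = 0 := by
    have h1 := conj_anticomm (A := 𝒜 2) (B := 𝒜 1) hV1' hAC21
    have h2 := conj_anticomm (A := V1 * 𝒜 2 * V1ᴴ) (B := V1 * 𝒜 1 * V1ᴴ) hV2' h1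
    rw [← hB1def, hV2B1, ← hconj] at h2
    exact h2
  have hC00 : C 0 0 = 0 := by
    have h0 := congrFun (congrFun hCZ 0) 0
    simp [pauliZ, Matrix.mul_apply, Matrix.vecMul, dotProduct, Matrix.vecHead,
      Matrix.vecTail, Fin.sum_univ_two] at h0
    linear_combination h0
  have hC11 : C 1 1 = 0 := by
    have h0 := congrFun (congrFun hCZ 1) 1
    simp [pauliZ, Matrix.mul_apply, Matrix.vecMul, dotProduct, Matrix.vecHead,
      Matrix.vecTail, Fin.sum_univ_two] at h0
    linear_combination h0
  set r : ℂ := C 1 0 with hrdef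
  have hC01 : C 0 1 = (starRingEnd ℂ) r := by
    have h0 := congrFun (congrFun hCH.eq 0) 1
    simpa [Matrix.conjTranspose_apply, Complex.star_def] using h0.symm
  have hrr : r + (starRingEnd ℂ) r = 0 := by
    have h0 := congrFun (congrFun hCX 0) 0
    simp [pauliX, Matrix.mul_apply, Matrix.vecMul, dotProduct, Matrix.vecHead,
      Matrix.vecTail, Fin.sum_univ_two, hC01, ← hrdef] at h0
    linear_combination h0
  have hr1 : r * (starRingEnd ℂ) r = 1 := by
    have h0 := hCn
    rw [hCH.eq] at h0
    simp [Matrix.trace, Matrix.mul_apply, Fin.sum_univ_two, hC00, hC11, hC01,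
      Complex.star_def, ← hrdef] at h0
    linear_combination h0 / 2
  have hfac : (r - Complex.I) * (r + Complex.I) = 0 := by
    linear_combination r * hrr - hr1 - Complex.I_sq
  rcases mul_eq_zero.mp hfac with hi | hi
  · left
    have hr : r = Complex.I := by linear_combination hi
    ext i j
    fin_cases i <;> fin_cases j <;>
      simp [pauliY, hC00, hC11, hC01, ← hrdef, hr, Complex.conj_I]
  · right
    have hr : r = -Complex.I := by linear_combination hi
    ext i j
    fin_cases i <;> fin_cases j <;>
      simp [pauliY, Matrix.neg_apply, hC00, hC11, hC01, ← hrdef, hr, Complex.conj_I]
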